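/- In the Benders reformulation LP'_R3, suppose (w̄, y_{τ₀}) satisfies the retained scenario-τ₀ constraints: flow conservation with demands q, capacity constraints Σ_s (y_{τ₀,s}^{α₁(e)} + y_{τ₀,s}^{α₂(e)}) ≤ w̄^e for all edges e, the prohibition y_{τ₀,s}^{α₁(τ₀)} + y_{τ₀,s}^{α₂(τ₀)} = 0, and bounds 0 ≤ y ≤ Σ_t q_{st}, 0 ≤ w̄ ≤ |K|. Then for every failed edge τ such that y_{τ₀,s}^{α₁(τ)} = y_{τ₀,s}^{α₂(τ)} = 0 for all s ∈ V, the subproblem value F_τ(w̄) equals 0 (the same flow y_{τ₀} is feasible for scenario τ with ε = 0). -/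

import Mathlib

open Finset

section

variable {V E : Type*} [Fintype V] [Fintype E] [DecidableEq V] [DecidableEq E]

/-- Outflow of the per-origin flow `y s` at node `v`: sum of `y s e b` over the arcs
`(e, b)` (orientation `b` of edge `e`) whose tail `src e b` is `v`. -/
def outflow (src : E → Bool → V) (ys : E → Bool → ℝ) (v : V) : ℝ :=
  ∑ e : E, ∑ b : Bool, if src e b = v then ys e b else 0

/-- Feasibility of per-origin flows `y` for the scenario in which edge `τ` has failed,
under capacities `w̄` relaxed by `ε`: supply `∑_{t ≠ s} q s t` at each origin `s`, zero
inflow at `s`, conservation with absorption `q s v` at `v ≠ s`, joint arc capacity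
`∑_s (y s e true + y s e false) ≤ w̄ e + ε`, zero flow on the failed edge `τ`, and
bounds `0 ≤ y s e b ≤ ∑_{t ≠ s} q s t`. -/
def ScenarioFeas (src tgt : E → Bool → V) (q : V → V → ℝ) (τ : E)
    (wbar : E → ℝ) (ε : ℝ) (y : V → E → Bool → ℝ) : Prop :=
  (∀ s : V, outflow src (y s) s = ∑ t ∈ univ.erase s, q s t) ∧
  (∀ s : V, outflow tgt (y s) s = 0) ∧
  (∀ s v : V, v ≠ s →
    outflow tgt (y s) v = outflow src (y s) v + q s v) ∧
  (∀ e : E, ∑ s : V, (y s e true + y s e false) ≤ wbar e + ε) ∧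
  (∀ s : V, y s τ true + y s τ false = 0) ∧
  (∀ s : V, ∀ e : E, ∀ b : Bool, 0 ≤ y s e b ∧ y s e b ≤ ∑ t ∈ univ.erase s, q s t)

end

section

variable {V E : Type*} [Fintype V] [Fintype E] [DecidableEq V]

theorem ScenarioFeas.of_forall_eq_zero {src tgt : E → Bool → V} {q : V → V → ℝ}
    {τ₀ τ : E} {wbar : E → ℝ} {ε : ℝ} {y : V → E → Bool → ℝ}
    (h : ScenarioFeas src tgt q τ₀ wbar ε y) (hτ : ∀ s b, y s τ b = 0) :
    ScenarioFeas src tgt q τ wbar ε y := by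
  obtain ⟨hsupply, hinflow, hconserve, hcap, -, hbounds⟩ := h
  exact ⟨hsupply, hinflow, hconserve, hcap, fun s => by simp only [hτ, add_zero], hbounds⟩

end

theorem stmt9_general {V E : Type*} [Fintype V] [Fintype E] [DecidableEq V]
    (src tgt : E → Bool → V)
    (q : V → V → ℝ) (wbar : E → ℝ)
    (τ₀ : E) (y₀ : V → E → Bool → ℝ)
    (h₀ : ScenarioFeas src tgt q τ₀ wbar 0 y₀)
    (τ : E) (hτ : ∀ s : V, ∀ b : Bool, y₀ s τ b = 0) :
    sInf {ε : ℝ | 0 ≤ ε ∧ ∃ y : V → E → Bool → ℝ,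
        ScenarioFeas src tgt q τ wbar ε y} = 0 :=
  IsLeast.csInf_eq ⟨⟨le_rfl, y₀, h₀.of_forall_eq_zero hτ⟩, fun _ hε => hε.1⟩

/-- Proposition 5 of the paper: if `(w̄, y₀)` satisfies the retained scenario-`τ₀`
constraints of `LP'_R3` (with bounds `0 ≤ w̄ ≤ |K|`), then for every failed edge `τ`
carrying no flow in `y₀` (i.e. `y₀ s τ b = 0` for all origins `s` and both
orientations `b`), the subproblem value `F_τ(w̄)` equals `0`: the same flow `y₀` is
feasible for scenario `τ` with `ε = 0`. -/
theorem stmt9 {V E : Type*} [Fintype V] [Fintype E] [DecidableEq V] [DecidableEq E]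
    (src tgt : E → Bool → V)
    (hopp : ∀ e : E, src e true = tgt e false ∧ src e false = tgt e true)
    (q : V → V → ℝ) (hq : ∀ s t, 0 ≤ q s t) (K : ℝ)
    (wbar : E → ℝ) (hw : ∀ e, 0 ≤ wbar e ∧ wbar e ≤ K)
    (τ₀ : E) (y₀ : V → E → Bool → ℝ)
    (h₀ : ScenarioFeas src tgt q τ₀ wbar 0 y₀)
    (τ : E) (hτ : ∀ s : V, ∀ b : Bool, y₀ s τ b = 0) :
    sInf {ε : ℝ | 0 ≤ ε ∧ ∃ y : V → E → Bool → ℝ,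
        ScenarioFeas src tgt q τ wbar ε y} = 0 :=
  stmt9_general src tgt q wbar τ₀ y₀ h₀ τ hτ
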